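/- The normalizer of SL₂(L) in SL₂(K) is exactly T(K)·SL₂(L): an element n ∈ SL₂(K) satisfies n·SL₂(L)·n⁻¹ = SL₂(L) if and only if n = d·g for some d ∈ T(K) and g ∈ SL₂(L). -/

import Mathlib

open Matrix Pointwise

noncomputable section

variable {K : Type*} [Field K]

abbrev SL2 (K : Type*) [Field K] := Matrix.SpecialLinearGroup (Fin 2) K

/-- `a(t) = [[1,t],[0,1]]`. -/
def aMat (t : K) : SL2 K :=
  ⟨!![1, t; 0, 1], by simp [Matrix.det_fin_two_of]⟩

/-- `b(t) = [[1,0],[t,1]]`. -/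
def bMat (t : K) : SL2 K :=
  ⟨!![1, 0; t, 1], by simp [Matrix.det_fin_two_of]⟩

/-- `diag(s) = [[s,0],[0,s⁻¹]]`. -/
def diagMat (s : Kˣ) : SL2 K :=
  ⟨!![(s : K), 0; 0, ((s⁻¹ : Kˣ) : K)], by simp [Matrix.det_fin_two_of]⟩

/-- `w = [[0,1],[1,0]]`, in `SL₂` since `char K = 2`. -/
def wMat (K : Type*) [Field K] [CharP K 2] : SL2 K :=
  ⟨!![0, 1; 1, 0], by simp [Matrix.det_fin_two_of, CharTwo.neg_eq]⟩

def setA (L : AddSubgroup K) : Set (SL2 K) := {g | ∃ t ∈ L, g = aMat t}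

def setAop (L : AddSubgroup K) : Set (SL2 K) := {g | ∃ t ∈ L, g = bMat t}

/-- Timmesfeld's `SL₂(L)`. -/
def SL2L (L : AddSubgroup K) : Subgroup (SL2 K) := Subgroup.closure (setA L ∪ setAop L)

/-- The subgroup of `Kˣ` generated by the nonzero elements of `L`. -/
def Tgen (L : AddSubgroup K) : Subgroup Kˣ := Subgroup.closure {u : Kˣ | (u : K) ∈ L}

def setTL (L : AddSubgroup K) : Set (SL2 K) := {g | ∃ s ∈ Tgen L, g = diagMat s}

def setTK (K : Type*) [Field K] : Set (SL2 K) := {g | ∃ s : Kˣ, g = diagMat s}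

def setB (L : AddSubgroup K) : Set (SL2 K) := setTL L * setA L

/-!
In characteristic 2 the determinant condition reads `g₀₀g₁₁ + g₀₁g₁₀ = 1`, and this makes the
matrices whose row products `gᵢ₀gᵢ₁` and column products `g₀ⱼg₁ⱼ` all lie in the `K²`-space
`L` a subgroup of `SL₂(K)`; it contains the generators, hence `SL₂(L)`.

If `n = [[a, b], [c, d]]` normalizes `SL₂(L)`, the first row of
`n a(1) n⁻¹ = [[1 + ac, a²], [c², 1 + ac]]` has product `a² + a²·ac ∈ L`, so `ac ∈ L`.
Applied to `n⁻¹ = [[d, b], [c, a]]` and to `n w = [[b, a], [d, c]]` this gives `cd ∈ L` and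
`bd ∈ L`. For `d ≠ 0` we get `n = diag(d⁻¹) · a(bd) · b(c/d)` with `c/d = d⁻² · cd ∈ L`,
and for `d = 0` we apply this to `n w`. Conversely `diag(s)` conjugates `a(t)`, `b(t)` to
`a(s²t)`, `b(s⁻²t)`.
-/

namespace SL2

variable (g h : SL2 K)

lemma det_eq : g 0 0 * g 1 1 - g 0 1 * g 1 0 = 1 := by
  have := g.det_coe
  rwa [Matrix.det_fin_two] at this

lemma mul_apply (i j : Fin 2) : (g * h) i j = g i 0 * h 0 j + g i 1 * h 1 j := by
  simp [Matrix.SpecialLinearGroup.coe_mul, Matrix.mul_apply, Fin.sum_univ_two]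

lemma ext_iff_fin_two :
    g = h ↔ g 0 0 = h 0 0 ∧ g 0 1 = h 0 1 ∧ g 1 0 = h 1 0 ∧ g 1 1 = h 1 1 := by
  refine ⟨by rintro rfl; simp, fun ⟨h00, h01, h10, h11⟩ => Matrix.SpecialLinearGroup.ext _ _ ?_⟩
  simp [Fin.forall_fin_two, *]

variable [CharP K 2]

lemma add_det_eq : g 0 0 * g 1 1 + g 0 1 * g 1 0 = 1 := by
  rw [← CharTwo.sub_eq_add]
  exact det_eq g

lemma coe_inv_of_charTwo : ⇑g⁻¹ = !![g 1 1, g 0 1; g 1 0, g 0 0] := by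
  rw [Matrix.SpecialLinearGroup.coe_inv, Matrix.adjugate_fin_two]
  simp only [CharTwo.neg_eq]

lemma mul_row_product (i : Fin 2) :
    (g * h) i 0 * (g * h) i 1 =
      g i 0 ^ 2 * (h 0 0 * h 0 1) + g i 1 ^ 2 * (h 1 0 * h 1 1) + g i 0 * g i 1 := by
  simp only [mul_apply]
  linear_combination g i 0 * g i 1 * add_det_eq h

lemma mul_col_product (j : Fin 2) :
    (g * h) 0 j * (g * h) 1 j =
      h 0 j ^ 2 * (g 0 0 * g 1 0) + h 1 j ^ 2 * (g 0 1 * g 1 1) + h 0 j * h 1 j := by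
  simp only [mul_apply]
  linear_combination h 0 j * h 1 j * add_det_eq g

end SL2

@[simp] lemma coe_aMat (t : K) : ⇑(aMat t) = !![1, t; 0, 1] := rfl

@[simp] lemma coe_bMat (t : K) : ⇑(bMat t) = !![1, 0; t, 1] := rfl

@[simp] lemma coe_diagMat (s : Kˣ) : ⇑(diagMat s) = !![(s : K), 0; 0, ((s⁻¹ : Kˣ) : K)] := rfl

@[simp] lemma coe_wMat [CharP K 2] : ⇑(wMat K) = !![0, 1; 1, 0] := rfl

def diagHom : Kˣ →* SL2 K where
  toFun := diagMat
  map_one' := by simp [SL2.ext_iff_fin_two]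
  map_mul' s t := by simp [SL2.ext_iff_fin_two, SL2.mul_apply, mul_comm]

lemma diagHom_apply (s : Kˣ) : diagHom s = diagMat s := rfl

lemma diagMat_conj_aMat (s : Kˣ) (t : K) :
    diagMat s * aMat t * (diagMat s)⁻¹ = aMat ((s : K) ^ 2 * t) := by
  rw [show (diagMat s)⁻¹ = diagMat s⁻¹ from (map_inv diagHom s).symm]
  simp [SL2.ext_iff_fin_two, SL2.mul_apply, sq, mul_comm, mul_left_comm]

lemma diagMat_conj_bMat (s : Kˣ) (t : K) :
    diagMat s * bMat t * (diagMat s)⁻¹ = bMat (((s⁻¹ : Kˣ) : K) ^ 2 * t) := by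
  rw [show (diagMat s)⁻¹ = diagMat s⁻¹ from (map_inv diagHom s).symm]
  simp [SL2.ext_iff_fin_two, SL2.mul_apply, sq, mul_comm, mul_left_comm]

lemma diagMat_mul_aMat_mul_bMat {n : SL2 K} (hd : n 1 1 ≠ 0) :
    diagMat (Units.mk0 (n 1 1) hd)⁻¹ * aMat (n 0 1 * n 1 1) * bMat (n 1 0 / n 1 1) = n := by
  have hdet := SL2.det_eq n
  refine (SL2.ext_iff_fin_two _ _).2 ⟨?_, ?_, ?_, ?_⟩ <;> simp [SL2.mul_apply] <;> field_simp
  linear_combination -hdet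

section

variable {L : AddSubgroup K}

lemma aMat_mem_SL2L {t : K} (ht : t ∈ L) : aMat t ∈ SL2L L :=
  Subgroup.subset_closure (Or.inl ⟨t, ht, rfl⟩)

lemma bMat_mem_SL2L {t : K} (ht : t ∈ L) : bMat t ∈ SL2L L :=
  Subgroup.subset_closure (Or.inr ⟨t, ht, rfl⟩)

lemma mul_mem_of_sq_mul_mem (hL : ∀ s t : K, t ∈ L → s ^ 2 * t ∈ L) {x y : K}
    (h : x ^ 2 * (x * y) ∈ L) : x * y ∈ L := by
  rcases eq_or_ne x 0 with rfl | hx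
  · simp
  · simpa [← mul_assoc, ← mul_pow, hx] using hL x⁻¹ _ h

lemma diagMat_mem_normalizer (hL : ∀ s t : K, t ∈ L → s ^ 2 * t ∈ L) (s : Kˣ) :
    diagMat s ∈ Subgroup.normalizer (SL2L L : Set (SL2 K)) := by
  suffices (diagHom : Kˣ →* SL2 K).range ≤ Subgroup.normalizer (SL2L L : Set (SL2 K)) from
    this ⟨s, rfl⟩
  rw [SL2L, Subgroup.le_normalizer_closure_iff]
  rintro _ ⟨s, rfl⟩ _ (⟨t, ht, rfl⟩ | ⟨t, ht, rfl⟩)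
  · rw [diagHom_apply, diagMat_conj_aMat]
    exact aMat_mem_SL2L (hL _ _ ht)
  · rw [diagHom_apply, diagMat_conj_bMat]
    exact bMat_mem_SL2L (hL _ _ ht)

variable [CharP K 2]

def entryProductSubgroup (hL : ∀ s t : K, t ∈ L → s ^ 2 * t ∈ L) : Subgroup (SL2 K) where
  carrier := {g | (∀ i, g i 0 * g i 1 ∈ L) ∧ ∀ j, g 0 j * g 1 j ∈ L}
  mul_mem' {g h} hg hh := by
    refine ⟨fun i => ?_, fun j => ?_⟩
    · rw [SL2.mul_row_product]
      exact add_mem (add_mem (hL _ _ (hh.1 0)) (hL _ _ (hh.1 1))) (hg.1 i)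
    · rw [SL2.mul_col_product]
      exact add_mem (add_mem (hL _ _ (hg.2 0)) (hL _ _ (hg.2 1))) (hh.2 j)
  one_mem' := by simp [Fin.forall_fin_two]
  inv_mem' {g} hg := by
    simp only [Set.mem_ofPred_eq, Fin.forall_fin_two, SL2.coe_inv_of_charTwo] at hg ⊢
    simp only [Matrix.of_apply, Matrix.cons_val', Matrix.cons_val_zero, Matrix.cons_val_one,
      Matrix.empty_val', Matrix.cons_val_fin_one]
    exact ⟨⟨by rw [mul_comm]; exact hg.2.2, by rw [mul_comm]; exact hg.2.1⟩,
      by rw [mul_comm]; exact hg.1.2, by rw [mul_comm]; exact hg.1.1⟩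

lemma SL2L_le_entryProductSubgroup (hL : ∀ s t : K, t ∈ L → s ^ 2 * t ∈ L) :
    SL2L L ≤ entryProductSubgroup hL := by
  rw [SL2L, Subgroup.closure_le]
  rintro _ (⟨t, ht, rfl⟩ | ⟨t, ht, rfl⟩) <;>
    exact ⟨fun i => by fin_cases i <;> simp [ht], fun j => by fin_cases j <;> simp [ht]⟩

lemma wMat_eq : wMat K = bMat 1 * aMat 1 * bMat 1 := by
  simp [SL2.ext_iff_fin_two, SL2.mul_apply, CharTwo.add_self_eq_zero]

lemma wMat_mem_SL2L (hsq : ∀ x : K, x ^ 2 ∈ L) : wMat K ∈ SL2L L := by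
  have h1 : (1 : K) ∈ L := by simpa using hsq 1
  rw [wMat_eq]
  exact mul_mem (mul_mem (bMat_mem_SL2L h1) (aMat_mem_SL2L h1)) (bMat_mem_SL2L h1)

lemma wMat_mul_self : wMat K * wMat K = 1 := by
  simp [SL2.ext_iff_fin_two, SL2.mul_apply]

lemma mul_wMat_apply (g : SL2 K) (i j : Fin 2) : (g * wMat K) i j = g i (1 - j) := by
  fin_cases j <;> simp [SL2.mul_apply]

lemma coe_conj_aMat (n : SL2 K) (t : K) :
    ⇑(n * aMat t * n⁻¹) =
      !![1 + n 0 0 * n 1 0 * t, n 0 0 ^ 2 * t; n 1 0 ^ 2 * t, 1 + n 0 0 * n 1 0 * t] := by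
  ext i j
  fin_cases i <;> fin_cases j <;>
    simp only [SL2.mul_apply, SL2.coe_inv_of_charTwo, coe_aMat, of_apply, cons_val', cons_val_zero,
      cons_val_one, cons_val_fin_one, Fin.zero_eta, Fin.mk_one, Fin.isValue, mul_one, mul_zero,
      add_zero]
  · linear_combination SL2.add_det_eq n
  · linear_combination n 0 0 * n 0 1 * CharTwo.two_eq_zero (R := K)
  · linear_combination n 1 0 * n 1 1 * CharTwo.two_eq_zero (R := K)
  · linear_combination SL2.add_det_eq n

lemma mul_mem_of_mem_normalizer (hsq : ∀ x : K, x ^ 2 ∈ L)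
    (hL : ∀ s t : K, t ∈ L → s ^ 2 * t ∈ L) {n : SL2 K}
    (hn : n ∈ Subgroup.normalizer (SL2L L : Set (SL2 K))) :
    n 0 0 * n 1 0 ∈ L := by
  have h1 : (1 : K) ∈ L := by simpa using hsq 1
  have hrow := (SL2L_le_entryProductSubgroup hL ((Subgroup.mem_normalizer_iff.1 hn _).1
    (aMat_mem_SL2L h1))).1 0
  simp only [coe_conj_aMat, Matrix.of_apply, Matrix.cons_val', Matrix.cons_val_zero,
    Matrix.cons_val_one, Matrix.empty_val', Matrix.cons_val_fin_one, mul_one] at hrow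
  have key : n 0 0 ^ 2 * (n 0 0 * n 1 0) = (1 + n 0 0 * n 1 0) * n 0 0 ^ 2 - n 0 0 ^ 2 := by ring
  exact mul_mem_of_sq_mul_mem hL (key ▸ sub_mem hrow (hsq _))

lemma exists_diagMat_mul_of_mem_normalizer_of_ne_zero (hsq : ∀ x : K, x ^ 2 ∈ L)
    (hL : ∀ s t : K, t ∈ L → s ^ 2 * t ∈ L) {n : SL2 K}
    (hn : n ∈ Subgroup.normalizer (SL2L L : Set (SL2 K))) (hd : n 1 1 ≠ 0) :
    ∃ d ∈ setTK K, ∃ g ∈ SL2L L, n = d * g := by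
  have hbd : n 0 1 * n 1 1 ∈ L := by
    simpa [mul_wMat_apply] using
      mul_mem_of_mem_normalizer hsq hL (mul_mem hn (Subgroup.le_normalizer (wMat_mem_SL2L hsq)))
  have hcd : n 1 0 * n 1 1 ∈ L := by
    simpa [Matrix.adjugate_fin_two, mul_comm] using mul_mem_of_mem_normalizer hsq hL (inv_mem hn)
  have hc_div_d : n 1 0 / n 1 1 = (n 1 1)⁻¹ ^ 2 * (n 1 0 * n 1 1) := by field_simp
  refine ⟨_, ⟨(Units.mk0 _ hd)⁻¹, rfl⟩, _,
    mul_mem (aMat_mem_SL2L hbd) (bMat_mem_SL2L (hc_div_d ▸ hL _ _ hcd)), ?_⟩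
  rw [← mul_assoc, diagMat_mul_aMat_mul_bMat hd]

lemma exists_diagMat_mul_of_mem_normalizer (hsq : ∀ x : K, x ^ 2 ∈ L)
    (hL : ∀ s t : K, t ∈ L → s ^ 2 * t ∈ L) {n : SL2 K}
    (hn : n ∈ Subgroup.normalizer (SL2L L : Set (SL2 K))) :
    ∃ d ∈ setTK K, ∃ g ∈ SL2L L, n = d * g := by
  rcases ne_or_eq (n 1 1) 0 with hd | hd
  · exact exists_diagMat_mul_of_mem_normalizer_of_ne_zero hsq hL hn hd
  have hc : n 1 0 ≠ 0 := fun hc => by simpa [hd, hc] using SL2.det_eq n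
  obtain ⟨d, hdT, g, hg, hnw⟩ := exists_diagMat_mul_of_mem_normalizer_of_ne_zero hsq hL
    (mul_mem hn (Subgroup.le_normalizer (wMat_mem_SL2L hsq))) (by simpa [mul_wMat_apply] using hc)
  refine ⟨d, hdT, g * wMat K, mul_mem hg (wMat_mem_SL2L hsq), ?_⟩
  rw [← mul_assoc, ← hnw, mul_assoc, wMat_mul_self, mul_one]

end

theorem normalizer_SL2L_general
    [CharP K 2]
    (L : AddSubgroup K) (hsq : ∀ x : K, x ^ 2 ∈ L)
    (hvs : ∀ s t : K, t ∈ L → s ^ 2 * t ∈ L) :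
    ∀ n : SL2 K,
      (fun g => n * g * n⁻¹) '' (SL2L L : Set (SL2 K)) = (SL2L L : Set (SL2 K)) ↔
        ∃ d ∈ setTK K, ∃ g ∈ SL2L L, n = d * g := by
  intro n
  change MulAut.conj n '' _ = _ ↔ _
  rw [← Subgroup.mem_normalizer_iff_conj_image_eq]
  refine ⟨exists_diagMat_mul_of_mem_normalizer hsq hvs, ?_⟩
  rintro ⟨_, ⟨s, rfl⟩, g, hg, rfl⟩
  exact mul_mem (diagMat_mem_normalizer hvs s) (Subgroup.le_normalizer hg)

/-- The normalizer of `SL₂(L)` in `SL₂(K)` is exactly `T(K)·SL₂(L)`. -/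
theorem normalizer_SL2L
    [CharP K 2] (himperf : ¬ Function.Surjective fun x : K => x ^ 2)
    (L : AddSubgroup K) (hsq : ∀ x : K, x ^ 2 ∈ L)
    (hvs : ∀ s t : K, t ∈ L → s ^ 2 * t ∈ L) :
    ∀ n : SL2 K,
      (fun g => n * g * n⁻¹) '' (SL2L L : Set (SL2 K)) = (SL2L L : Set (SL2 K)) ↔
        ∃ d ∈ setTK K, ∃ g ∈ SL2L L, n = d * g :=
  normalizer_SL2L_general L hsq hvs

end
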